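/- arXiv:2009.05100 — 2 statements merged into one kernel-verified Lean document; each statement's English description precedes it below -/
import Mathlib

section
/- Let A be an n×n irreducible tridiagonal doubly stochastic matrix with n ≥ 3 satisfying b_{i-1} + b_i ≤ 1/2 for all i (with b_0 = b_n = 0, b_i = A(i,i+1)). Then 0 is not an eigenvalue of A; equivalently, det A ≠ 0. -/
open Matrix

/-- An `n × n` real matrix is doubly stochastic if it is entrywise non-negative
and every row sum and column sum equals 1. -/
def IsDoublyStochastic {n : ℕ} (A : Matrix (Fin n) (Fin n) ℝ) : Prop :=
  (∀ i j, 0 ≤ A i j) ∧ (∀ i, ∑ j, A i j = 1) ∧ (∀ j, ∑ i, A i j = 1)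

/-- A matrix is tridiagonal if `A i j = 0` whenever `|i - j| ≥ 2`. -/
def IsTridiagonal {n : ℕ} (A : Matrix (Fin n) (Fin n) ℝ) : Prop :=
  ∀ i j : Fin n, 2 ≤ |(i : ℤ) - (j : ℤ)| → A i j = 0

/-- The superdiagonal entries `b_k = A (k, k+1)` in the 1-based indexing of the paper
(so `bEnt A k = A ⟨k-1⟩ ⟨k⟩` in 0-based indexing for `1 ≤ k ≤ n-1`), with the
convention `b_0 = b_n = 0`. -/
def bEnt {n : ℕ} (A : Matrix (Fin n) (Fin n) ℝ) (k : ℕ) : ℝ :=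
  if h : 1 ≤ k ∧ k < n then A ⟨k - 1, by omega⟩ ⟨k, h.2⟩ else 0


/-!
Row `k` and column `k` of a tridiagonal matrix differ only in their off-diagonal entries, so equal
row and column sums force `A (k+1) k = A k (k+1) = b_{k+1}`. Hence `A i i = 1 - b_i - b_{i+1} ≥ 1/2`
dominates the off-diagonal row sum `b_i + b_{i+1}`, strictly in the first row because `b_2 > 0`.
For `A v = 0`, weak dominance at a coordinate where `|v|` is maximal forces `|v|` to be maximal
at every neighbour coupled to it by a nonzero entry; going down the positive subdiagonal reaches
row `0`, where strict dominance forces `v = 0` (Taussky's argument).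
-/

open Finset

section DiagonalDominance

variable {K ι : Type*} [NormedField K] [Fintype ι] [DecidableEq ι] {A : Matrix ι ι K}
  {v : ι → K}

theorem Matrix.norm_diag_mul_le_of_mulVec_eq_zero (hv : A *ᵥ v = 0) (k : ι) :
    ‖A k k‖ * ‖v k‖ ≤ ∑ j ∈ univ.erase k, ‖A k j‖ * ‖v j‖ := by
  have hrow : A k k * v k = -∑ j ∈ univ.erase k, A k j * v j := by
    have := congrFun hv k
    rw [mulVec, dotProduct, Pi.zero_apply, ← add_sum_erase _ _ (mem_univ k)] at this
    exact eq_neg_of_add_eq_zero_left this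
  calc ‖A k k‖ * ‖v k‖ = ‖∑ j ∈ univ.erase k, A k j * v j‖ := by rw [← norm_mul, hrow, norm_neg]
    _ ≤ ∑ j ∈ univ.erase k, ‖A k j * v j‖ := norm_sum_le _ _
    _ = ∑ j ∈ univ.erase k, ‖A k j‖ * ‖v j‖ := by simp only [norm_mul]

theorem Matrix.norm_eq_of_mulVec_eq_zero_of_sum_row_le_diag (hv : A *ᵥ v = 0) {k : ι}
    (hmax : ∀ j, ‖v j‖ ≤ ‖v k‖) (hdom : ∑ j ∈ univ.erase k, ‖A k j‖ ≤ ‖A k k‖) {j : ι}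
    (hjk : j ≠ k) (hA : A k j ≠ 0) : ‖v j‖ = ‖v k‖ := by
  refine (hmax j).antisymm (not_lt.mp fun hlt => ?_)
  have : ∑ i ∈ univ.erase k, ‖A k i‖ * ‖v i‖ < ∑ i ∈ univ.erase k, ‖A k i‖ * ‖v k‖ :=
    sum_lt_sum (fun i _ => mul_le_mul_of_nonneg_left (hmax i) (norm_nonneg _))
      ⟨j, mem_erase.mpr ⟨hjk, mem_univ j⟩, mul_lt_mul_of_pos_left hlt (norm_pos_iff.mpr hA)⟩
  rw [← sum_mul] at this
  have := mul_le_mul_of_nonneg_right hdom (norm_nonneg (v k))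
  linarith [norm_diag_mul_le_of_mulVec_eq_zero hv k]

theorem Matrix.eq_zero_of_mulVec_eq_zero_of_sum_row_lt_diag (hv : A *ᵥ v = 0) {k : ι}
    (hmax : ∀ j, ‖v j‖ ≤ ‖v k‖) (hdom : ∑ j ∈ univ.erase k, ‖A k j‖ < ‖A k k‖) : v = 0 := by
  suffices hk : ‖v k‖ = 0 from funext fun j => norm_le_zero_iff.mp (hk ▸ hmax j)
  refine le_antisymm (not_lt.mp fun hpos => ?_) (norm_nonneg _)
  have : ∑ j ∈ univ.erase k, ‖A k j‖ * ‖v j‖ ≤ (∑ j ∈ univ.erase k, ‖A k j‖) * ‖v k‖ := by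
    rw [sum_mul]
    exact sum_le_sum fun j _ => mul_le_mul_of_nonneg_left (hmax j) (norm_nonneg _)
  have := mul_lt_mul_of_pos_right hdom hpos
  linarith [norm_diag_mul_le_of_mulVec_eq_zero hv k]

end DiagonalDominance

theorem Matrix.eq_zero_of_mulVec_eq_zero_of_sum_row_le_diag_of_subdiag_ne_zero {K : Type*}
    [NormedField K] {n : ℕ} {A : Matrix (Fin (n + 1)) (Fin (n + 1)) K} {v : Fin (n + 1) → K}
    (hv : A *ᵥ v = 0) (hdom : ∀ k, ∑ j ∈ univ.erase k, ‖A k j‖ ≤ ‖A k k‖)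
    (hdom₀ : ∑ j ∈ univ.erase 0, ‖A 0 j‖ < ‖A 0 0‖)
    (hsub : ∀ i : Fin n, A i.succ i.castSucc ≠ 0) : v = 0 := by
  obtain ⟨k, -, hk⟩ := exists_max_image univ (fun i => ‖v i‖) univ_nonempty
  have hmax (i : Fin (n + 1)) (hi : ‖v i‖ = ‖v k‖) (j : Fin (n + 1)) : ‖v j‖ ≤ ‖v i‖ :=
    hi ▸ hk j (mem_univ j)
  have hdown (i : Fin (n + 1)) : ‖v i‖ = ‖v k‖ → ‖v 0‖ = ‖v k‖ := by
    induction i using Fin.induction with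
    | zero => exact id
    | succ i ih =>
      intro hi
      exact ih (.trans (norm_eq_of_mulVec_eq_zero_of_sum_row_le_diag hv (hmax _ hi) (hdom _)
        Fin.castSucc_lt_succ.ne (hsub i)) hi)
  exact eq_zero_of_mulVec_eq_zero_of_sum_row_lt_diag hv (hmax 0 (hdown k rfl)) hdom₀

theorem bEnt_succ {m : ℕ} (A : Matrix (Fin (m + 1)) (Fin (m + 1)) ℝ) (i : Fin m) :
    bEnt A (i + 1) = A i.castSucc i.succ := by
  rw [bEnt, dif_pos ⟨by omega, by omega⟩]
  rfl

section Tridiagonal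

variable {n : ℕ} {A : Matrix (Fin n) (Fin n) ℝ}

theorem IsTridiagonal.transpose (hA : IsTridiagonal A) :
    IsTridiagonal Aᵀ := fun i j h => hA j i (abs_sub_comm (i : ℤ) j ▸ h)

theorem IsTridiagonal.sum_Ioi (hA : IsTridiagonal A) (i : Fin n) :
    ∑ j ∈ Ioi i, A i j = bEnt A (i + 1) := by
  by_cases h : (i : ℕ) + 1 < n
  · rw [bEnt, dif_pos ⟨by omega, h⟩, sum_eq_single ⟨i + 1, h⟩]
    · rfl
    · intro j hj hne
      have : (i : ℕ) < j := Fin.lt_def.mp (mem_Ioi.mp hj)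
      have : (j : ℕ) ≠ i + 1 := fun e => hne (Fin.ext e)
      exact hA i j (le_abs.mpr (Or.inr (by omega)))
    · simp [Fin.lt_def]
  · rw [bEnt, dif_neg (by omega), sum_eq_zero]
    intro j hj
    have : (i : ℕ) < j := Fin.lt_def.mp (mem_Ioi.mp hj)
    omega

theorem IsTridiagonal.sum_Iio (hA : IsTridiagonal A) (i : Fin n) :
    ∑ j ∈ Iio i, A i j = bEnt Aᵀ i := by
  by_cases h : 1 ≤ (i : ℕ)
  · rw [bEnt, dif_pos ⟨h, i.2⟩, sum_eq_single ⟨i - 1, by omega⟩]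
    · rfl
    · intro j hj hne
      have : (j : ℕ) < i := Fin.lt_def.mp (mem_Iio.mp hj)
      have : (j : ℕ) ≠ i - 1 := fun e => hne (Fin.ext e)
      exact hA i j (le_abs.mpr (Or.inl (by omega)))
    · simp [Fin.lt_def]; omega
  · rw [bEnt, dif_neg (by omega), sum_eq_zero]
    intro j hj
    have : (j : ℕ) < i := Fin.lt_def.mp (mem_Iio.mp hj)
    omega

theorem IsTridiagonal.sum_erase (hA : IsTridiagonal A) (i : Fin n) :
    ∑ j ∈ univ.erase i, A i j = bEnt Aᵀ i + bEnt A (i + 1) := by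
  rw [← compl_singleton, ← Ioi_disjUnion_Iio, sum_disjUnion, hA.sum_Ioi, hA.sum_Iio, add_comm]

-- Comparing row and column `k` shows that `bEnt Aᵀ - bEnt A` takes the same value at `k` and
-- `k + 1`; it vanishes at `0`.
theorem IsTridiagonal.bEnt_transpose (hA : IsTridiagonal A)
    (hsum : ∀ i, ∑ j, A i j = ∑ j, A j i) (k : ℕ) : bEnt Aᵀ k = bEnt A k := by
  induction k with
  | zero => simp [bEnt]
  | succ k ih =>
    by_cases hk : k < n
    · have hrow := hA.sum_erase ⟨k, hk⟩
      have hcol := hA.transpose.sum_erase ⟨k, hk⟩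
      simp only [transpose_apply, transpose_transpose] at hcol
      have hsumk := hsum ⟨k, hk⟩
      rw [← add_sum_erase _ _ (mem_univ _), ← add_sum_erase _ _ (mem_univ _), hrow, hcol] at hsumk
      linarith
    · rw [bEnt, bEnt, dif_neg (by omega), dif_neg (by omega)]

theorem IsDoublyStochastic.bEnt_transpose (hDS : IsDoublyStochastic A) (hA : IsTridiagonal A)
    (k : ℕ) : bEnt Aᵀ k = bEnt A k :=
  hA.bEnt_transpose (fun i => (hDS.2.1 i).trans (hDS.2.2 i).symm) k

theorem IsDoublyStochastic.sum_erase_norm_eq (hDS : IsDoublyStochastic A) (hA : IsTridiagonal A)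
    (i : Fin n) : ∑ j ∈ univ.erase i, ‖A i j‖ = bEnt A i + bEnt A (i + 1) := by
  rw [sum_congr rfl fun j _ => Real.norm_of_nonneg (hDS.1 i j), hA.sum_erase,
    hDS.bEnt_transpose hA]

theorem IsDoublyStochastic.diag_eq (hDS : IsDoublyStochastic A) (hA : IsTridiagonal A)
    (i : Fin n) : A i i = 1 - (bEnt A i + bEnt A (i + 1)) := by
  have hrow := hDS.2.1 i
  rw [← add_sum_erase _ _ (mem_univ i), hA.sum_erase, hDS.bEnt_transpose hA] at hrow
  linarith

end Tridiagonal

/-- An irreducible tridiagonal doubly stochastic matrix with `n ≥ 3` satisfying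
`b_{i-1} + b_i ≤ 1/2` for all `i` does not have `0` as an eigenvalue; equivalently its
determinant is nonzero. -/
theorem irreducible_tridiagonal_doublyStochastic_diagDom_nonsingular {n : ℕ} (hn : 3 ≤ n)
    (A : Matrix (Fin n) (Fin n) ℝ) (hDS : IsDoublyStochastic A) (htri : IsTridiagonal A)
    (hirr : ∀ k : ℕ, 1 ≤ k → k < n → 0 < bEnt A k)
    (hdom : ∀ i : Fin n, bEnt A (i : ℕ) + bEnt A ((i : ℕ) + 1) ≤ 1 / 2) :
    (¬∃ v : Fin n → ℝ, v ≠ 0 ∧ A.mulVec v = 0) ∧ A.det ≠ 0 := by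
  obtain ⟨m, rfl⟩ : ∃ m, n = m + 1 := ⟨n - 1, by omega⟩
  have hdiag (i) : ‖A i i‖ = 1 - (bEnt A i + bEnt A (i + 1)) := by
    rw [Real.norm_of_nonneg (hDS.1 i i), hDS.diag_eq htri]
  have hweak (i) : ∑ j ∈ univ.erase i, ‖A i j‖ ≤ ‖A i i‖ := by
    rw [hDS.sum_erase_norm_eq htri, hdiag]
    linarith [hdom i]
  have hstrict : ∑ j ∈ univ.erase 0, ‖A 0 j‖ < ‖A 0 0‖ := by
    have hb₀ : bEnt A 0 = 0 := by simp [bEnt]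
    have hb₁₂ : bEnt A 1 + bEnt A 2 ≤ 1 / 2 := hdom ⟨1, by omega⟩
    rw [hDS.sum_erase_norm_eq htri, hdiag, Fin.val_zero, hb₀]
    linarith [hirr 2 (by omega) (by omega)]
  have hsub (i : Fin m) : A i.succ i.castSucc ≠ 0 := by
    have := hirr (i + 1) (by omega) (by omega)
    rw [← hDS.bEnt_transpose htri, bEnt_succ] at this
    exact this.ne'
  have hker : ¬∃ v : Fin (m + 1) → ℝ, v ≠ 0 ∧ A *ᵥ v = 0 := fun ⟨v, hv, hAv⟩ =>
    hv (eq_zero_of_mulVec_eq_zero_of_sum_row_le_diag_of_subdiag_ne_zero hAv hweak hstrict hsub)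
  exact ⟨hker, fun hdet => hker (exists_mulVec_eq_zero_iff.mpr hdet)⟩
end

section
/- Every n×n tridiagonal doubly stochastic matrix A satisfying b_{i-1} + b_i ≤ 1/2 for all i = 1,…,n (where b_i = A(i,i+1) and b_0 = b_n = 0) is completely positive. -/
/-!
A tridiagonal matrix whose row sums equal its column sums is symmetric: across the cut between
`{0, …, k}` and its complement, the mass flowing out is the single entry `A k (k+1)` and the mass
flowing in is `A (k+1) k`, and these agree. A symmetric nonnegative diagonally dominant matrix is
completely positive, since it equals `½ ∑_{i ≠ j} a_ij (e_i + e_j)(e_i + e_j)ᵀ` plus a nonnegative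
diagonal matrix. For a symmetric tridiagonal doubly stochastic matrix, the off-diagonal entries of
row `i` are `b_{i-1}` and `b_i`, so diagonal dominance is exactly `b_{i-1} + b_i ≤ 1/2`.
-/

open Matrix

open Finset

section CompletelyPositive

variable {ι : Type*}

def IsCompletelyPositive (A : Matrix ι ι ℝ) : Prop :=
  ∃ (k : ℕ) (V : Matrix ι (Fin k) ℝ), (∀ i j, 0 ≤ V i j) ∧ A = V * Vᵀ

namespace IsCompletelyPositive

theorem zero : IsCompletelyPositive (0 : Matrix ι ι ℝ) :=
  ⟨0, 0, fun _ _ => le_rfl, by simp⟩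

theorem add {A B : Matrix ι ι ℝ} (hA : IsCompletelyPositive A) (hB : IsCompletelyPositive B) :
    IsCompletelyPositive (A + B) := by
  obtain ⟨k, V, hV, rfl⟩ := hA
  obtain ⟨l, W, hW, rfl⟩ := hB
  refine ⟨k + l, of fun i => Fin.append (V i) (W i), fun i c => ?_, ?_⟩
  · induction c using Fin.addCases <;> simp [hV, hW]
  · ext i j
    simp [mul_apply, Fin.sum_univ_add]

theorem smul {A : Matrix ι ι ℝ} (hA : IsCompletelyPositive A) {c : ℝ} (hc : 0 ≤ c) :
    IsCompletelyPositive (c • A) := by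
  obtain ⟨k, V, hV, rfl⟩ := hA
  refine ⟨k, √c • V, fun i j => mul_nonneg (Real.sqrt_nonneg c) (hV i j), ?_⟩
  rw [transpose_smul, smul_mul, Matrix.mul_smul, smul_smul, Real.mul_self_sqrt hc]

theorem sum {κ : Type*} {s : Finset κ} {A : κ → Matrix ι ι ℝ}
    (hA : ∀ x ∈ s, IsCompletelyPositive (A x)) : IsCompletelyPositive (∑ x ∈ s, A x) :=
  sum_induction A IsCompletelyPositive (fun _ _ => add) zero hA

end IsCompletelyPositive

theorem isCompletelyPositive_vecMulVec {v : ι → ℝ} (hv : 0 ≤ v) :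
    IsCompletelyPositive (vecMulVec v v) :=
  ⟨1, of fun i _ => v i, fun i _ => hv i, by ext i j; simp [mul_apply, vecMulVec_apply]⟩

variable [Fintype ι] [DecidableEq ι]

theorem isCompletelyPositive_diagonal {d : ι → ℝ} (hd : ∀ i, 0 ≤ d i) :
    IsCompletelyPositive (diagonal d) := by
  have hsum : diagonal d = ∑ i, vecMulVec (Pi.single i √(d i)) (Pi.single i √(d i)) := by
    ext p q
    simp only [diagonal_apply, Matrix.sum_apply, vecMulVec_apply, Pi.single_apply, mul_ite,
      ite_mul, mul_zero, zero_mul, sum_ite_eq, mem_univ, if_true]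
    split_ifs with h
    · subst h
      exact (Real.mul_self_sqrt (hd p)).symm
    · rfl
  rw [hsum]
  exact IsCompletelyPositive.sum fun i _ =>
    isCompletelyPositive_vecMulVec (Pi.single_nonneg.2 (Real.sqrt_nonneg _))

theorem sum_smul_vecMulVec_single_add_single {B : Matrix ι ι ℝ} (hB : B.IsSymm) :
    ∑ i, ∑ j, B i j • vecMulVec (Pi.single i 1 + Pi.single j 1) (Pi.single i 1 + Pi.single j 1)
      = (2 : ℝ) • (B + diagonal fun i => ∑ j, B i j) := by
  ext p q
  simp only [Matrix.sum_apply, Matrix.smul_apply, vecMulVec_apply, Pi.add_apply, Pi.single_apply,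
    Matrix.add_apply, diagonal_apply, smul_eq_mul, mul_add, mul_ite, mul_one, mul_zero,
    sum_add_distrib, sum_ite_eq, mem_univ, if_true, sum_ite_irrel,
    sum_const_zero]
  simp only [hB.apply q]
  split_ifs with h
  · subst h
    ring
  · ring

theorem isCompletelyPositive_of_diagDominant {A : Matrix ι ι ℝ} (hA : A.IsSymm)
    (hnonneg : ∀ i j, 0 ≤ A i j) (hdom : ∀ i, ∑ j ∈ univ.erase i, A i j ≤ A i i) :
    IsCompletelyPositive A := by
  set B : Matrix ι ι ℝ := of fun i j => if i = j then 0 else A i j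
  have hB : B.IsSymm := by
    ext i j
    simp only [B, transpose_apply, of_apply, eq_comm (a := i), hA.apply]
  have hrowB : ∀ i, ∑ j, B i j = ∑ j ∈ univ.erase i, A i j := fun i => by
    simp [B, sum_ite, filter_ne]
  have hdecomp : A = (1 / 2 : ℝ) • ∑ i, ∑ j,
      B i j • vecMulVec (Pi.single i 1 + Pi.single j 1) (Pi.single i 1 + Pi.single j 1)
      + diagonal fun i => A i i - ∑ j ∈ univ.erase i, A i j := by
    rw [sum_smul_vecMulVec_single_add_single hB, smul_smul]
    simp only [← hrowB]
    ext p q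
    by_cases h : p = q
    · subst h
      simp [B]
    · simp [B, h]
  rw [hdecomp]
  refine .add (.smul (.sum fun i _ => .sum fun j _ => .smul ?_ ?_) (by norm_num))
    (isCompletelyPositive_diagonal fun i => sub_nonneg.2 (hdom i))
  · exact isCompletelyPositive_vecMulVec
      (add_nonneg (Pi.single_nonneg.2 zero_le_one) (Pi.single_nonneg.2 zero_le_one))
  · by_cases h : i = j <;> simp [B, h, hnonneg]

end CompletelyPositive

theorem sum_sum_compl_eq_of_rowSum_eq_colSum {ι α : Type*} [Fintype ι] [DecidableEq ι]
    [AddCommGroup α] {A : Matrix ι ι α} (h : ∀ i, ∑ j, A i j = ∑ j, A j i) (S : Finset ι) :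
    ∑ i ∈ S, ∑ j ∈ Sᶜ, A i j = ∑ i ∈ S, ∑ j ∈ Sᶜ, A j i := by
  have hS : ∑ i ∈ S, (∑ j ∈ S, A i j + ∑ j ∈ Sᶜ, A i j)
      = ∑ i ∈ S, (∑ j ∈ S, A j i + ∑ j ∈ Sᶜ, A j i) :=
    sum_congr rfl fun i _ => by rw [sum_add_sum_compl, sum_add_sum_compl, h]
  rwa [sum_add_distrib, sum_add_distrib, sum_comm (s := S) (t := S) (f := fun i j => A j i),
    add_right_inj] at hS

theorem sum_ite_eq_le_of_injective {α β : Type*} [DecidableEq β] {s : Finset α} {f : α → β}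
    (hf : Function.Injective f) (b : β) {c : ℝ} (hc : 0 ≤ c) :
    ∑ a ∈ s, (if f a = b then c else 0) ≤ c := by
  rw [sum_ite, sum_const_zero, add_zero, sum_const, nsmul_eq_mul]
  have hcard : #{a ∈ s | f a = b} ≤ 1 :=
    card_le_one.2 fun x hx y hy => hf ((mem_filter.1 hx).2.trans (mem_filter.1 hy).2.symm)
  exact mul_le_of_le_one_left hc (by exact_mod_cast hcard)

section Tridiagonal

variable {n : ℕ} {A : Matrix (Fin n) (Fin n) ℝ}

theorem bEnt_nonneg (hA : ∀ i j, 0 ≤ A i j) (k : ℕ) : 0 ≤ bEnt A k := by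
  unfold bEnt
  split_ifs
  exacts [hA _ _, le_rfl]

theorem bEnt_val_add_one {i j : Fin n} (h : (i : ℕ) + 1 = j) : bEnt A (i + 1) = A i j := by
  rw [bEnt, dif_pos ⟨Nat.le_add_left 1 i, h ▸ j.isLt⟩]
  congr 1
  ext
  simp [h]

namespace IsTridiagonal

theorem apply_eq_zero (hA : IsTridiagonal A) {i j : Fin n}
    (h : (i : ℕ) + 2 ≤ j ∨ (j : ℕ) + 2 ≤ i) : A i j = 0 :=
  hA i j (by rw [le_abs]; omega)

theorem transpose_s10 (hA : IsTridiagonal A) : IsTridiagonal Aᵀ :=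
  fun i j h => hA j i (by rwa [abs_sub_comm])

theorem sum_Iic_sum_compl (hA : IsTridiagonal A) {i j : Fin n} (hij : (i : ℕ) + 1 = j) :
    ∑ a ∈ Iic i, ∑ b ∈ (Iic i)ᶜ, A a b = A i j := by
  have hj : j ∈ (Iic i : Finset (Fin n))ᶜ := by
    rw [mem_compl, mem_Iic, not_le, Fin.lt_def]
    omega
  rw [sum_eq_single_of_mem i (mem_Iic.2 le_rfl), sum_eq_single_of_mem j hj]
  · intro b hb hbj
    simp only [mem_compl, mem_Iic, not_le, Fin.lt_def] at hb
    exact hA.apply_eq_zero (Or.inl (by rw [Ne, Fin.ext_iff] at hbj; omega))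
  · intro a ha hai
    simp only [mem_Iic, Fin.le_def] at ha
    rw [Ne, Fin.ext_iff] at hai
    refine sum_eq_zero fun b hb => hA.apply_eq_zero (Or.inl ?_)
    simp only [mem_compl, mem_Iic, not_le, Fin.lt_def] at hb
    omega

theorem isSymm (hA : IsTridiagonal A) (hsum : ∀ i, ∑ j, A i j = ∑ j, A j i) : A.IsSymm := by
  have hcut : ∀ i j : Fin n, (i : ℕ) + 1 = j → A j i = A i j := fun i j hij => by
    have h := sum_sum_compl_eq_of_rowSum_eq_colSum hsum (Iic i)
    have hT := hA.transpose_s10.sum_Iic_sum_compl hij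
    simp only [transpose_apply] at hT
    rw [hA.sum_Iic_sum_compl hij, hT] at h
    exact h.symm
  ext i j
  rw [transpose_apply]
  rcases (by omega : (i : ℕ) + 1 = j ∨ (j : ℕ) + 1 = i ∨ (i : ℕ) = j ∨
      ((i : ℕ) + 2 ≤ j ∨ (j : ℕ) + 2 ≤ i)) with h | h | h | h
  · exact hcut i j h
  · exact (hcut j i h).symm
  · rw [Fin.ext h]
  · rw [hA.apply_eq_zero h, hA.apply_eq_zero h.symm]

theorem sum_erase_le_bEnt (hA : IsTridiagonal A) (hsymm : A.IsSymm) (hnonneg : ∀ i j, 0 ≤ A i j)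
    (i : Fin n) : ∑ j ∈ univ.erase i, A i j ≤ bEnt A i + bEnt A (i + 1) := by
  have hterm : ∀ j ∈ univ.erase i, A i j = (if (j : ℕ) + 1 = i then bEnt A i else 0)
      + (if (j : ℕ) = i + 1 then bEnt A (i + 1) else 0) := by
    intro j hj
    rw [mem_erase, Ne, Fin.ext_iff] at hj
    rcases (by omega : (j : ℕ) + 1 = i ∨ (j : ℕ) = i + 1 ∨ ((i : ℕ) + 2 ≤ j ∨ (j : ℕ) + 2 ≤ i))
      with h | h | h
    · rw [if_pos h, if_neg (by omega), ← h, bEnt_val_add_one h, hsymm.apply, add_zero]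
    · rw [if_neg (by omega), if_pos h, bEnt_val_add_one h.symm, zero_add]
    · rw [if_neg (by omega), if_neg (by omega), hA.apply_eq_zero h, add_zero]
  rw [sum_congr rfl hterm, sum_add_distrib]
  exact add_le_add
    (sum_ite_eq_le_of_injective ((add_left_injective 1).comp Fin.val_injective) _
      (bEnt_nonneg hnonneg _))
    (sum_ite_eq_le_of_injective Fin.val_injective _ (bEnt_nonneg hnonneg _))

end IsTridiagonal

end Tridiagonal

/-- Every tridiagonal doubly stochastic matrix satisfying `b_{i-1} + b_i ≤ 1/2` for all
`i = 1, …, n` is completely positive. -/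
theorem tridiagonal_doublyStochastic_diagDom_completelyPositive {n : ℕ}
    (A : Matrix (Fin n) (Fin n) ℝ) (hDS : IsDoublyStochastic A) (htri : IsTridiagonal A)
    (hdom : ∀ i : Fin n, bEnt A (i : ℕ) + bEnt A ((i : ℕ) + 1) ≤ 1 / 2) :
    ∃ (k : ℕ) (V : Matrix (Fin n) (Fin k) ℝ), (∀ i j, 0 ≤ V i j) ∧ A = V * Vᵀ := by
  obtain ⟨hnonneg, hrow, hcol⟩ := hDS
  have hsymm : A.IsSymm := htri.isSymm fun i => (hrow i).trans (hcol i).symm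
  refine isCompletelyPositive_of_diagDominant hsymm hnonneg fun i => ?_
  have hoff := (htri.sum_erase_le_bEnt hsymm hnonneg i).trans (hdom i)
  have hi := hrow i
  rw [← add_sum_erase _ _ (mem_univ i)] at hi
  linarith
end
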